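/- arXiv:2406.02330 — 5 statements merged into one kernel-verified Lean document; each statement's English description precedes it below -/
import Mathlib

section
/- Let H be an infinite-dimensional separable complex Hilbert space and U a bounded linear operator on H such that every bounded linear operator on H is similar to a scalar multiple of the restriction of U to some closed U-invariant subspace (i.e., U is universal). Then every bounded linear operator on H has a nontrivial closed invariant subspace if and only if every minimal nontrivial closed invariant subspace of U is one-dimensional. -/
/-!
All infinite-dimensional separable Hilbert spaces are isometric, so the restriction of `U` to an
infinite-dimensional closed invariant subspace is similar to an operator on `H`. Hence, if every
operator on `H` has a nontrivial closed invariant subspace, a minimal invariant subspace of `U`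
is finite-dimensional and therefore spanned by an eigenvector of `U`.

Conversely, universality applied to the identity gives `U` an eigenvector, so `H` itself is not
minimal for `U`. Applied to an operator `T` without nontrivial closed invariant subspaces it gives
an infinite-dimensional closed `U`-invariant subspace `M ≠ H` containing no smaller one: a minimal
invariant subspace that is not a line.
-/

open Module

section Separable

variable {𝕜 E : Type*} [RCLike 𝕜] [NormedAddCommGroup E] [InnerProductSpace 𝕜 E]

theorem Orthonormal.countable [TopologicalSpace.SeparableSpace E] {ι : Type*} {v : ι → E}
    (hv : Orthonormal 𝕜 v) : Countable ι := by
  refine Pairwise.countable_of_isOpen_disjoint (s := fun i => Metric.ball (v i) (1 / 2))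
    (fun i j hij => Metric.ball_disjoint_ball ?_) (fun _ => Metric.isOpen_ball)
    (fun i => ⟨v i, Metric.mem_ball_self one_half_pos⟩)
  have hsq : ‖v i - v j‖ ^ 2 = 2 := by
    rw [norm_sub_sq (𝕜 := 𝕜), hv.inner_eq_zero hij, hv.norm_eq_one, hv.norm_eq_one]
    norm_num
  rw [dist_eq_norm]
  nlinarith [norm_nonneg (v i - v j)]

variable [CompleteSpace E] [TopologicalSpace.SeparableSpace E]

theorem exists_hilbertBasis_nat (hE : ¬ FiniteDimensional 𝕜 E) :
    Nonempty (HilbertBasis ℕ 𝕜 E) := by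
  obtain ⟨w, b, -⟩ := exists_hilbertBasis 𝕜 E
  have : Countable w := b.orthonormal.countable
  have : Infinite w := by
    rw [← not_finite_iff_infinite]
    intro
    have := Fintype.ofFinite w
    exact hE (.of_basis b.toOrthonormalBasis.toBasis)
  obtain ⟨e⟩ := nonempty_equiv_of_countable (α := ℕ) (β := w)
  refine ⟨HilbertBasis.mk (b.orthonormal.comp e e.injective) ?_⟩
  rw [Set.range_comp, e.range_eq_univ, Set.image_univ]
  exact b.dense_span.ge

theorem nonempty_linearIsometryEquiv_of_not_finiteDimensional {F : Type*} [NormedAddCommGroup F]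
    [InnerProductSpace 𝕜 F] [CompleteSpace F] [TopologicalSpace.SeparableSpace F]
    (hE : ¬ FiniteDimensional 𝕜 E) (hF : ¬ FiniteDimensional 𝕜 F) : Nonempty (E ≃ₗᵢ[𝕜] F) := by
  obtain ⟨bE⟩ := exists_hilbertBasis_nat hE
  obtain ⟨bF⟩ := exists_hilbertBasis_nat hF
  exact ⟨bE.repr.trans bF.repr.symm⟩

end Separable

namespace Module.End

variable {K V : Type*} [Field K] [AddCommGroup V] [Module K V] {f : End K V} {μ : K} {v : V}

theorem HasEigenvector.apply_mem_span_singleton (hv : f.HasEigenvector μ v) {x : V}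
    (hx : x ∈ K ∙ v) : f x ∈ K ∙ v := by
  have hx' : x ∈ f.eigenspace μ := (Submodule.span_singleton_le_iff_mem _ _).mpr hv.1 hx
  rw [mem_eigenspace_iff.mp hx']
  exact Submodule.smul_mem _ μ hx

theorem hasEigenvector_inv_of_eq_smul (hv : v ≠ 0) (h : v = μ • f v) :
    f.HasEigenvector μ⁻¹ v := by
  have hμ : μ ≠ 0 := by
    rintro rfl
    exact hv (by simpa using h)
  exact ⟨mem_eigenspace_iff.mpr ((eq_inv_smul_iff₀ hμ).mpr h.symm), hv⟩

end Module.End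

namespace ContinuousLinearMap

variable {𝕜 E F : Type*} [NontriviallyNormedField 𝕜] [NormedAddCommGroup E] [NormedSpace 𝕜 E]
  [NormedAddCommGroup F] [NormedSpace 𝕜 F]

def HasNontrivialInvariantSubspace (T : E →L[𝕜] E) : Prop :=
  ∃ M : Submodule 𝕜 E, IsClosed (M : Set E) ∧ M ≠ ⊥ ∧ M ≠ ⊤ ∧ ∀ x ∈ M, T x ∈ M

namespace HasNontrivialInvariantSubspace

variable {T : E →L[𝕜] E}

theorem smul (hT : T.HasNontrivialInvariantSubspace) (c : 𝕜) :
    (c • T).HasNontrivialInvariantSubspace := by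
  obtain ⟨M, hMc, hMb, hMt, hMT⟩ := hT
  exact ⟨M, hMc, hMb, hMt, fun x hx => M.smul_mem c (hMT x hx)⟩

theorem of_intertwining {S : F →L[𝕜] F} (e : E ≃L[𝕜] F) (h : ∀ x, e (T x) = S (e x))
    (hS : S.HasNontrivialInvariantSubspace) : T.HasNontrivialInvariantSubspace := by
  obtain ⟨N, hNc, hNb, hNt, hNS⟩ := hS
  let φ := (Submodule.orderIsoMapComap (e : E ≃ₗ[𝕜] F)).symm
  refine ⟨φ N, hNc.preimage e.continuous, ?_, ?_, fun x hx => ?_⟩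
  · rwa [ne_eq, map_eq_bot_iff φ]
  · rwa [ne_eq, map_eq_top_iff φ]
  · simpa [φ, h] using hNS _ hx

theorem of_hasEigenvector [CompleteSpace 𝕜] {c : 𝕜} {v : E}
    (hv : End.HasEigenvector (T : End 𝕜 E) c v) (hvE : (𝕜 ∙ v) ≠ ⊤) :
    T.HasNontrivialInvariantSubspace :=
  ⟨𝕜 ∙ v, Submodule.closed_of_finiteDimensional _, by simpa using hv.2, hvE,
    fun _ hx => hv.apply_mem_span_singleton hx⟩

end HasNontrivialInvariantSubspace

theorem finrank_eq_one_of_not_hasNontrivialInvariantSubspace [CompleteSpace 𝕜] [IsAlgClosed 𝕜]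
    [FiniteDimensional 𝕜 E] [Nontrivial E] {T : E →L[𝕜] E}
    (hT : ¬ T.HasNontrivialInvariantSubspace) : finrank 𝕜 E = 1 := by
  obtain ⟨c, hc⟩ := End.exists_eigenvalue (T : End 𝕜 E)
  obtain ⟨v, hv⟩ := hc.exists_hasEigenvector
  have hspan : (𝕜 ∙ v) = ⊤ := by
    by_contra hvE
    exact hT (.of_hasEigenvector hv hvE)
  rw [← finrank_top, ← hspan, finrank_span_singleton hv.2]

theorem hasNontrivialInvariantSubspace_restrict_iff {U : E →L[𝕜] E} {M : Submodule 𝕜 E}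
    (hM : IsClosed (M : Set E)) (hMU : ∀ x ∈ M, U x ∈ M) :
    (U.restrict hMU).HasNontrivialInvariantSubspace ↔
      ∃ N : Submodule 𝕜 E, IsClosed (N : Set E) ∧ N ≠ ⊥ ∧ N < M ∧ ∀ x ∈ N, U x ∈ N := by
  have hinj := Submodule.map_injective_of_injective M.injective_subtype
  constructor
  · rintro ⟨N, hNc, hNb, hNt, hNU⟩
    refine ⟨N.map M.subtype, ?_, ?_, ?_, ?_⟩
    · rw [Submodule.map_coe]
      exact hM.isClosedEmbedding_subtypeVal.isClosedMap _ hNc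
    · rwa [ne_eq, ← Submodule.map_bot M.subtype, hinj.eq_iff]
    · refine (Submodule.map_subtype_le M N).lt_of_ne ?_
      rwa [ne_eq, ← hinj.eq_iff, Submodule.map_subtype_top] at hNt
    · rintro _ ⟨y, hy, rfl⟩
      exact ⟨_, hNU y hy, rfl⟩
  · rintro ⟨N, hNc, hNb, hNM, hNU⟩
    refine ⟨N.comap M.subtype, hNc.preimage continuous_subtype_val, ?_, ?_, fun x hx => hNU x hx⟩
    · intro h
      apply hNb
      rw [← inf_eq_left.mpr hNM.le, inf_comm, ← Submodule.map_comap_subtype, h, Submodule.map_bot]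
    · rw [ne_eq, Submodule.comap_subtype_eq_top]
      exact hNM.not_ge

theorem not_hasNontrivialInvariantSubspace_restrict_iff {U : E →L[𝕜] E} {M : Submodule 𝕜 E}
    (hM : IsClosed (M : Set E)) (hMU : ∀ x ∈ M, U x ∈ M) :
    ¬ (U.restrict hMU).HasNontrivialInvariantSubspace ↔
      ∀ N : Submodule 𝕜 E, IsClosed (N : Set E) → N ≠ ⊥ → N < M → ¬ ∀ x ∈ N, U x ∈ N := by
  simp only [hasNontrivialInvariantSubspace_restrict_iff hM hMU, not_exists, not_and]

def IsUniversal (U : E →L[𝕜] E) : Prop :=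
  ∀ T : E →L[𝕜] E, ∃ (lam : 𝕜) (M : Submodule 𝕜 E), IsClosed (M : Set E) ∧
    (∀ x ∈ M, U x ∈ M) ∧ ∃ Φ : E ≃L[𝕜] M, ∀ x : E, (Φ (T x) : E) = lam • U (Φ x : E)

namespace IsUniversal

variable {U : E →L[𝕜] E}

theorem hasNontrivialInvariantSubspace [CompleteSpace 𝕜] (hU : U.IsUniversal)
    (hE : ¬ FiniteDimensional 𝕜 E) : U.HasNontrivialInvariantSubspace := by
  have : Nontrivial E := not_subsingleton_iff_nontrivial.mp fun _ => hE inferInstance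
  obtain ⟨μ, M, -, -, Φ, hΦ⟩ := hU 1
  obtain ⟨x, hx⟩ := exists_ne (0 : E)
  have hv := End.hasEigenvector_inv_of_eq_smul (f := (U : End 𝕜 E)) (v := Φ x)
    (by simpa using hx) (by simpa using hΦ x)
  exact .of_hasEigenvector hv fun h => hE ⟨h ▸ Submodule.fg_span_singleton _⟩

theorem exists_not_hasNontrivialInvariantSubspace_restrict (hU : U.IsUniversal)
    {T : E →L[𝕜] E} (hT : ¬ T.HasNontrivialInvariantSubspace) :
    ∃ (M : Submodule 𝕜 E) (_ : IsClosed (M : Set E)) (hMU : ∀ x ∈ M, U x ∈ M),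
      ¬ (U.restrict hMU).HasNontrivialInvariantSubspace ∧ Nonempty (E ≃L[𝕜] M) := by
  obtain ⟨lam, M, hMc, hMU, Φ, hΦ⟩ := hU T
  refine ⟨M, hMc, hMU, fun hM => hT ?_, ⟨Φ⟩⟩
  exact (hM.smul lam).of_intertwining Φ fun x => Subtype.ext (hΦ x)

end IsUniversal

theorem finiteDimensional_of_not_hasNontrivialInvariantSubspace {𝕜 E F : Type*} [RCLike 𝕜]
    [NormedAddCommGroup E] [InnerProductSpace 𝕜 E] [CompleteSpace E]
    [TopologicalSpace.SeparableSpace E] [NormedAddCommGroup F] [InnerProductSpace 𝕜 F]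
    [CompleteSpace F] [TopologicalSpace.SeparableSpace F] (hE : ¬ FiniteDimensional 𝕜 E)
    (h : ∀ T : E →L[𝕜] E, T.HasNontrivialInvariantSubspace) {V : F →L[𝕜] F}
    (hV : ¬ V.HasNontrivialInvariantSubspace) : FiniteDimensional 𝕜 F := by
  by_contra hF
  obtain ⟨ψ⟩ := nonempty_linearIsometryEquiv_of_not_finiteDimensional hF hE
  let e : F ≃L[𝕜] E := ψ.toContinuousLinearEquiv
  exact hV (.of_intertwining e (S := (e : F →L[𝕜] E) ∘L V ∘L e.symm) (fun x => by simp) (h _))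

end ContinuousLinearMap

open ContinuousLinearMap in
/-- If `U` is a universal operator on an infinite-dimensional separable complex
Hilbert space `H`, then every bounded operator on `H` has a nontrivial closed
invariant subspace if and only if every minimal nontrivial closed `U`-invariant
subspace is one-dimensional. -/
theorem universal_invariant_subspace_equivalence
    (H : Type*) [NormedAddCommGroup H] [InnerProductSpace ℂ H] [CompleteSpace H]
    [TopologicalSpace.SeparableSpace H] (hinf : ¬ FiniteDimensional ℂ H)
    (U : H →L[ℂ] H)
    (huniv : ∀ T : H →L[ℂ] H, ∃ (lam : ℂ) (M : Submodule ℂ H),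
      IsClosed (M : Set H) ∧ (∀ x ∈ M, U x ∈ M) ∧
      ∃ Φ : H ≃L[ℂ] M, ∀ x : H, (Φ (T x) : H) = lam • U ((Φ x : H))) :
    (∀ T : H →L[ℂ] H, ∃ M : Submodule ℂ H,
        IsClosed (M : Set H) ∧ M ≠ ⊥ ∧ M ≠ ⊤ ∧ ∀ x ∈ M, T x ∈ M) ↔
    (∀ M : Submodule ℂ H,
        IsClosed (M : Set H) → M ≠ ⊥ → M ≠ ⊤ → (∀ x ∈ M, U x ∈ M) →
        (∀ N : Submodule ℂ H, IsClosed (N : Set H) → N ≠ ⊥ → N < M →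
          ¬ (∀ x ∈ N, U x ∈ N)) →
        Module.finrank ℂ M = 1) := by
  have hU : U.IsUniversal := huniv
  constructor
  · intro hISP M hMc hMb _ hMU hmin
    have hM := (not_hasNontrivialInvariantSubspace_restrict_iff hMc hMU).mpr hmin
    have : Nontrivial M := Submodule.nontrivial_iff_ne_bot.mpr hMb
    have : CompleteSpace M := hMc.completeSpace_coe
    have := finiteDimensional_of_not_hasNontrivialInvariantSubspace hinf hISP hM
    exact finrank_eq_one_of_not_hasNontrivialInvariantSubspace hM
  · intro hmin T
    by_contra hT
    obtain ⟨M, hMc, hMU, hM, ⟨Φ⟩⟩ := 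
      hU.exists_not_hasNontrivialInvariantSubspace_restrict hT
    rw [not_hasNontrivialInvariantSubspace_restrict_iff hMc hMU] at hM
    have hMt : M ≠ ⊤ := by
      rintro rfl
      obtain ⟨S, hSc, hSb, hSt, hSU⟩ := hU.hasNontrivialInvariantSubspace hinf
      exact hM S hSc hSb hSt.lt_top hSU
    have hMinf : ¬ FiniteDimensional ℂ M := fun _ => hinf (.equiv Φ.symm.toLinearEquiv)
    have hMb : M ≠ ⊥ := by
      rintro rfl
      exact hMinf inferInstance
    exact hMinf (finite_of_finrank_eq_succ (hmin M hMc hMb hMt hMU hM))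
end

section
/- Let ψ be a hyperbolic automorphism of 𝔻 with fixed points a, b ∈ ∂𝔻 and let μ, ν ≥ 0. Define ω_{μ,ν}(z) = (a − z)^μ (b − z)^ν on 𝔻. Then the quotient |ω_{μ,ν}(ψ(z)) / ω_{μ,ν}(z)| is bounded above and bounded away from zero on 𝔻. -/
open Complex Filter Metric Set

noncomputable section

/-- A hyperbolic automorphism of the open unit disc `𝔻`, with attractive fixed
point `a` and repulsive fixed point `b` on the unit circle, and (real) derivative
values `da = ψ'(a) ∈ (0,1)`, `db = ψ'(b) ∈ (1,∞)` with `da * db = 1`. -/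
structure HypAuto where
  ψ : ℂ → ℂ
  a : ℂ
  b : ℂ
  da : ℝ
  db : ℝ
  ha : ‖a‖ = 1
  hb : ‖b‖ = 1
  hab : a ≠ b
  holo : ∃ R > 1, DifferentiableOn ℂ ψ (ball (0:ℂ) R)
  bij : BijOn ψ (ball (0:ℂ) 1) (ball (0:ℂ) 1)
  noFix : ∀ z ∈ ball (0:ℂ) 1, ψ z ≠ z
  fixa : ψ a = a
  fixb : ψ b = b
  hda : deriv ψ a = (da : ℂ)
  hdb : deriv ψ b = (db : ℂ)
  hda1 : 0 < da ∧ da < 1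
  hdb1 : 1 < db
  hmulder : da * db = 1
  attract : ∀ z ∈ ball (0:ℂ) 1, Tendsto (fun n => ψ^[n] z) atTop (nhds a)

open scoped Topology ComplexConjugate

/-!
With `G_p := dslope ψ p` one has `p - ψ z = G_p z * (p - z)` at the fixed points `p = a, b`, so
the modulus of the quotient is `|G_a z|^μ * |G_b z|^ν`. Since `ψ` is holomorphic beyond the
closed disc, this is continuous there, and it is bounded above and away from zero by compactness
as soon as `G_p` does not vanish on the closed disc: at `p` because `ψ'(p) ≠ 0`, elsewhere
because `ψ` is injective on the closed disc.

That injectivity comes from the Schwarz lemma. Composing `ψ` with the disc automorphism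
exchanging `ψ 0` and `0` gives a holomorphic bijection `f` of the disc fixing `0`. Its inverse is
holomorphic too (an injective holomorphic map has nonvanishing derivative: near a critical point
it is `f z₀ + h ^ n` with `h` a local coordinate and `n ≥ 2`), so Schwarz applied to both gives
`|f z| = |z|`, whence `f` is a rotation; by continuity this persists on the closed disc.
-/

lemma not_injOn_pow_of_mem_nhds_zero {n : ℕ} (hn : 2 ≤ n) {s : Set ℂ} (hs : s ∈ 𝓝 0) :
    ¬InjOn (· ^ n) s := by
  intro hinj
  obtain ⟨ζ, hζ⟩ : ∃ ζ : ℂ, IsPrimitiveRoot ζ n := ⟨_, isPrimitiveRoot_exp n (by omega)⟩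
  obtain ⟨ε, hε, hball⟩ := Metric.mem_nhds_iff.mp hs
  set w : ℂ := ((ε / 2 : ℝ) : ℂ)
  have hw : ‖w‖ < ε := by
    rw [norm_real, Real.norm_of_nonneg (by positivity)]; linarith
  have hζw : ‖ζ * w‖ < ε := by rwa [norm_mul, hζ.norm'_eq_one (by omega), one_mul]
  have h_eq : ζ * w = w :=
    hinj (hball (mem_ball_zero_iff.mpr hζw)) (hball (mem_ball_zero_iff.mpr hw))
      (by simp only [mul_pow, hζ.pow_eq_one, one_mul])
  have hw0 : w ≠ 0 := ofReal_ne_zero.mpr (by positivity)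
  exact hζ.ne_one (by omega) (mul_right_cancel₀ hw0 (h_eq.trans (one_mul w).symm))

lemma AnalyticAt.exists_analyticAt_pow_eq {u : ℂ → ℂ} {z₀ : ℂ} (hu : AnalyticAt ℂ u z₀)
    (hu₀ : u z₀ ≠ 0) {n : ℕ} (hn : n ≠ 0) : ∃ r, AnalyticAt ℂ r z₀ ∧ ∀ z, r z ^ n = u z := by
  obtain ⟨c, hc⟩ := IsAlgClosed.exists_pow_nat_eq (u z₀) (Nat.pos_of_ne_zero hn)
  refine ⟨fun z ↦ c * (u z / u z₀) ^ (n⁻¹ : ℂ), ?_, fun z ↦ ?_⟩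
  · exact analyticAt_const.mul <| (hu.div_const).cpow analyticAt_const <| by
      simp [div_self hu₀]
  · rw [mul_pow, cpow_nat_inv_pow _ hn, hc, mul_div_cancel₀ _ hu₀]

lemma AnalyticAt.two_le_analyticOrderAt_sub_of_deriv_eq_zero {𝕜 : Type*}
    [NontriviallyNormedField 𝕜] [CompleteSpace 𝕜] [CharZero 𝕜] {f : 𝕜 → 𝕜} {z₀ : 𝕜}
    (hf : AnalyticAt 𝕜 f z₀) (hder : deriv f z₀ = 0) :
    2 ≤ analyticOrderAt (f · - f z₀) z₀ := by
  rw [← hf.analyticOrderAt_deriv_add_one]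
  have : 1 ≤ analyticOrderAt (deriv f) z₀ := by
    rw [Order.one_le_iff_ne_zero, Ne, hf.deriv.analyticOrderAt_eq_zero, not_not]
    exact hder
  calc (2 : ℕ∞) = 1 + 1 := by norm_num
    _ ≤ _ := by gcongr

lemma AnalyticAt.exists_hasStrictDerivAt_eventually_sub_eq_pow {f : ℂ → ℂ} {z₀ : ℂ}
    (hf : AnalyticAt ℂ f z₀) {n : ℕ} (hn : n ≠ 0) (hord : analyticOrderAt (f · - f z₀) z₀ = n) :
    ∃ h : ℂ → ℂ, ∃ c ≠ 0, HasStrictDerivAt h c z₀ ∧ h z₀ = 0 ∧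
      ∀ᶠ z in 𝓝 z₀, f z - f z₀ = h z ^ n := by
  obtain ⟨g, hg, hg₀, hfg⟩ := ((hf.sub analyticAt_const).analyticOrderAt_eq_natCast).mp hord
  obtain ⟨r, hr, hrg⟩ := hg.exists_analyticAt_pow_eq hg₀ hn
  have hr₀ : r z₀ ≠ 0 := fun h0 ↦ hg₀ (by rw [← hrg, h0, zero_pow hn])
  refine ⟨fun z ↦ (z - z₀) * r z, r z₀, hr₀, ?_, by simp, ?_⟩
  · simpa using ((hasStrictDerivAt_id z₀).sub (hasStrictDerivAt_const z₀ z₀)).fun_mul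
      hr.hasStrictDerivAt
  · filter_upwards [hfg] with z hz
    simp only [Pi.sub_apply, smul_eq_mul] at hz
    rw [hz, mul_pow, hrg]

lemma AnalyticAt.deriv_ne_zero_of_injOn {f : ℂ → ℂ} {z₀ : ℂ} {s : Set ℂ}
    (hf : AnalyticAt ℂ f z₀) (hs : s ∈ 𝓝 z₀) (hinj : InjOn f s) : deriv f z₀ ≠ 0 := by
  intro hder
  have hfin : analyticOrderAt (f · - f z₀) z₀ ≠ ⊤ := by
    rw [Ne, analyticOrderAt_eq_top]
    intro hconst
    obtain ⟨z, ⟨hz, hzs⟩, hne⟩ :=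
      (((hconst.and hs).filter_mono nhdsWithin_le_nhds).and
        (self_mem_nhdsWithin (a := z₀) (s := {z₀}ᶜ))).exists
    exact hne (hinj hzs (mem_of_mem_nhds hs) (sub_eq_zero.mp hz))
  obtain ⟨n, hn⟩ := ENat.ne_top_iff_exists.mp hfin
  have h2 : 2 ≤ n := by
    exact_mod_cast hn ▸ hf.two_le_analyticOrderAt_sub_of_deriv_eq_zero hder
  obtain ⟨h, c, hc, hh, hh₀, hfh⟩ :=
    hf.exists_hasStrictDerivAt_eventually_sub_eq_pow (by omega) hn.symm
  have hmem : h '' (s ∩ {z | f z - f z₀ = h z ^ n}) ∈ 𝓝 0 := by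
    rw [← hh₀, ← hh.map_nhds_eq hc]
    exact image_mem_map (inter_mem hs hfh)
  refine not_injOn_pow_of_mem_nhds_zero h2 hmem ?_
  rintro _ ⟨x, ⟨hxs, hx : f x - f z₀ = h x ^ n⟩, rfl⟩
    _ ⟨y, ⟨hys, hy : f y - f z₀ = h y ^ n⟩, rfl⟩ (hxy : h x ^ n = h y ^ n)
  rw [hinj hxs hys (by linear_combination hx - hy + hxy)]

lemma Set.InjOn.differentiableOn_invFunOn {f : ℂ → ℂ} {U : Set ℂ} (hinj : InjOn f U)
    (hU : IsOpen U) (hf : DifferentiableOn ℂ f U) :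
    DifferentiableOn ℂ (Function.invFunOn f U) (f '' U) := by
  rintro _ ⟨z, hz, rfl⟩
  have hfa : AnalyticAt ℂ f z := hf.analyticAt (hU.mem_nhds hz)
  have hleft : ∀ᶠ x in 𝓝 z, Function.invFunOn f U (f x) = x :=
    eventually_of_mem (hU.mem_nhds hz) fun x hx ↦ hinj.leftInvOn_invFunOn hx
  have hinv := hfa.hasStrictDerivAt.to_local_left_inverse
    (hfa.deriv_ne_zero_of_injOn (hU.mem_nhds hz) hinj) hleft
  exact hinv.hasDerivAt.differentiableAt.differentiableWithinAt

lemma exists_norm_eq_one_eqOn_mul_of_bijOn_ball {f : ℂ → ℂ}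
    (hf : DifferentiableOn ℂ f (ball 0 1)) (hbij : BijOn f (ball 0 1) (ball 0 1)) (h₀ : f 0 = 0) :
    ∃ q : ℂ, ‖q‖ = 1 ∧ EqOn f (q * ·) (ball 0 1) := by
  set g := Function.invFunOn f (ball 0 1)
  have hg : DifferentiableOn ℂ g (ball 0 1) := by
    simpa [hbij.image_eq] using hbij.injOn.differentiableOn_invFunOn isOpen_ball hf
  have hgf : ∀ z ∈ ball (0 : ℂ) 1, g (f z) = z := fun z hz ↦ hbij.injOn.leftInvOn_invFunOn hz
  have hg₀ : g 0 = 0 := by simpa [h₀] using hgf 0 (mem_ball_self one_pos)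
  have hnorm : ∀ z ∈ ball (0 : ℂ) 1, ‖f z‖ = ‖z‖ := by
    intro z hz
    refine le_antisymm (norm_le_norm_of_mapsTo_ball hf
      (hbij.mapsTo.mono_right ball_subset_closedBall) h₀ (mem_ball_zero_iff.mp hz)) ?_
    calc ‖z‖ = ‖g (f z)‖ := by rw [hgf z hz]
      _ ≤ ‖f z‖ := norm_le_norm_of_mapsTo_ball hg
        (hbij.surjOn.mapsTo_invFunOn.mono_right ball_subset_closedBall) hg₀
        (mem_ball_zero_iff.mp (hbij.mapsTo hz))
  have hhalf : (2⁻¹ : ℂ) ∈ ball (0 : ℂ) 1 := by rw [mem_ball_zero_iff]; norm_num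
  have hslope : ‖dslope f 0 2⁻¹‖ = 1 / 1 := by
    rw [dslope_of_ne _ (by norm_num), slope_def_field, h₀, sub_zero, sub_zero, norm_div,
      hnorm _ hhalf, div_self (by norm_num), div_one]
  refine ⟨dslope f 0 2⁻¹, by simpa using hslope, fun z hz ↦ ?_⟩
  have := affine_of_mapsTo_ball_of_norm_dslope_eq_div hf
    (by simpa [h₀] using hbij.mapsTo.mono_right ball_subset_closedBall) hhalf hslope hz
  simpa [h₀, mul_comm] using this

def blaschke (w z : ℂ) : ℂ := (w - z) / (1 - conj w * z)

lemma blaschke_denom_ne_zero {w z : ℂ} (hw : ‖w‖ < 1) (hz : ‖z‖ ≤ 1) : 1 - conj w * z ≠ 0 := by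
  refine sub_ne_zero.mpr fun h ↦ ?_
  have : ‖conj w * z‖ < 1 := by
    rw [norm_mul, norm_conj]
    nlinarith [norm_nonneg w, norm_nonneg z]
  rw [← h, norm_one] at this
  exact lt_irrefl _ this

lemma normSq_one_sub_conj_mul_sub_normSq_sub (w z : ℂ) :
    normSq (1 - conj w * z) - normSq (w - z) = (1 - normSq w) * (1 - normSq z) := by
  simp only [normSq_apply, sub_re, sub_im, mul_re, mul_im, one_re, one_im, conj_re, conj_im]
  ring

lemma norm_blaschke_lt_one {w z : ℂ} (hw : ‖w‖ < 1) (hz : ‖z‖ < 1) : ‖blaschke w z‖ < 1 := by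
  have hd := blaschke_denom_ne_zero hw hz.le
  rw [blaschke, norm_div, div_lt_one (norm_pos_iff.mpr hd), ← sq_lt_sq₀ (norm_nonneg _)
    (norm_nonneg _), ← normSq_eq_norm_sq, ← normSq_eq_norm_sq, ← sub_pos,
    normSq_one_sub_conj_mul_sub_normSq_sub]
  have hw' : normSq w < 1 := by rw [normSq_eq_norm_sq]; nlinarith [norm_nonneg w]
  have hz' : normSq z < 1 := by rw [normSq_eq_norm_sq]; nlinarith [norm_nonneg z]
  exact mul_pos (sub_pos.mpr hw') (sub_pos.mpr hz')

lemma blaschke_blaschke {w z : ℂ} (hw : ‖w‖ < 1) (hz : ‖z‖ ≤ 1) :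
    blaschke w (blaschke w z) = z := by
  have hd := blaschke_denom_ne_zero hw hz
  have hd' := blaschke_denom_ne_zero hw hw.le
  have hnum : w - (w - z) / (1 - conj w * z) = z * (1 - conj w * w) / (1 - conj w * z) := by
    rw [eq_div_iff hd, sub_mul, div_mul_cancel₀ _ hd]
    ring
  have hden :
      1 - conj w * ((w - z) / (1 - conj w * z)) = (1 - conj w * w) / (1 - conj w * z) := by
    rw [eq_div_iff hd, sub_mul, mul_assoc, div_mul_cancel₀ _ hd]
    ring
  rw [blaschke, blaschke, hnum, hden, div_div_div_cancel_right₀ hd, mul_div_cancel_right₀ _ hd']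

lemma differentiableAt_blaschke {w z : ℂ} (hw : ‖w‖ < 1) (hz : ‖z‖ ≤ 1) :
    DifferentiableAt ℂ (blaschke w) z :=
  ((differentiableAt_const w).sub differentiableAt_id).div
    ((differentiableAt_const 1).sub ((differentiableAt_const _).mul differentiableAt_id))
    (blaschke_denom_ne_zero hw hz)

lemma bijOn_blaschke {w : ℂ} (hw : ‖w‖ < 1) : BijOn (blaschke w) (ball 0 1) (ball 0 1) := by
  have hmaps : MapsTo (blaschke w) (ball 0 1) (ball 0 1) := fun z hz ↦
    mem_ball_zero_iff.mpr (norm_blaschke_lt_one hw (mem_ball_zero_iff.mp hz))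
  have hinv : LeftInvOn (blaschke w) (blaschke w) (ball 0 1) := fun z hz ↦
    blaschke_blaschke hw (mem_ball_zero_iff.mp hz).le
  exact InvOn.bijOn ⟨hinv, hinv⟩ hmaps hmaps

lemma injOn_closedBall_of_bijOn_ball {ψ : ℂ → ℂ} (hc : ContinuousOn ψ (closedBall 0 1))
    (hd : DifferentiableOn ℂ ψ (ball 0 1)) (hbij : BijOn ψ (ball 0 1) (ball 0 1)) :
    InjOn ψ (closedBall 0 1) := by
  have hclosure : closure (ball (0 : ℂ) 1) = closedBall 0 1 := closure_ball 0 one_ne_zero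
  have hψK : MapsTo ψ (closedBall 0 1) (closedBall 0 1) := by
    simpa [hclosure] using hbij.mapsTo.closure_of_continuousOn (hclosure ▸ hc)
  set w := ψ 0
  have hw : ‖w‖ < 1 := mem_ball_zero_iff.mp (hbij.mapsTo (mem_ball_self one_pos))
  set f := blaschke w ∘ ψ
  have hfc : ContinuousOn f (closedBall 0 1) := fun z hz ↦
    ((differentiableAt_blaschke hw (mem_closedBall_zero_iff.mp (hψK hz))).continuousAt
      |>.comp_continuousWithinAt (hc z hz))
  have hfd : DifferentiableOn ℂ f (ball 0 1) := fun z hz ↦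
    (differentiableAt_blaschke hw (mem_ball_zero_iff.mp (hbij.mapsTo hz)).le
      |>.comp_differentiableWithinAt z (hd z hz))
  obtain ⟨q, hq, hfq⟩ := exists_norm_eq_one_eqOn_mul_of_bijOn_ball hfd
    ((bijOn_blaschke hw).comp hbij) (by simp [f, w, blaschke])
  have hfq' : EqOn f (q * ·) (closedBall 0 1) :=
    hfq.of_subset_closure hfc (continuous_const_mul q).continuousOn ball_subset_closedBall
      hclosure.ge
  intro z₁ h₁ z₂ h₂ he
  have hq₀ : q ≠ 0 := by rintro rfl; simp at hq
  exact mul_left_cancel₀ hq₀ ((hfq' h₁).symm.trans ((congrArg (blaschke w) he).trans (hfq' h₂)))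

lemma IsCompact.exists_bounds_of_continuousOn_pos {X : Type*} [TopologicalSpace X] {K : Set X}
    {F : X → ℝ} (hK : IsCompact K) (hF : ContinuousOn F K) (hpos : ∀ z ∈ K, 0 < F z) :
    ∃ c C : ℝ, 0 < c ∧ ∀ z ∈ K, c ≤ F z ∧ F z ≤ C := by
  rcases K.eq_empty_or_nonempty with rfl | hne
  · exact ⟨1, 0, one_pos, by simp⟩
  obtain ⟨x, hx, hmin⟩ := hK.exists_isMinOn hne hF
  obtain ⟨y, -, hmax⟩ := hK.exists_isMaxOn hne hF
  exact ⟨F x, F y, hpos x hx, fun z hz ↦ ⟨hmin hz, hmax hz⟩⟩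

lemma dslope_ne_zero_of_injOn {𝕜 : Type*} [NontriviallyNormedField 𝕜] {f : 𝕜 → 𝕜} {s : Set 𝕜}
    {p z : 𝕜} (hinj : InjOn f s) (hp : p ∈ s) (hz : z ∈ s) (hd : deriv f p ≠ 0) :
    dslope f p z ≠ 0 := by
  rcases eq_or_ne z p with rfl | hzp
  · rwa [dslope_same]
  rw [dslope_of_ne _ hzp, slope_def_field]
  exact div_ne_zero (sub_ne_zero.mpr fun he ↦ hzp (hinj hz hp he)) (sub_ne_zero.mpr hzp)

lemma norm_sub_apply_eq_norm_dslope_mul {𝕜 : Type*} [NontriviallyNormedField 𝕜] {f : 𝕜 → 𝕜}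
    {p : 𝕜} (hp : f p = p) (z : 𝕜) : ‖p - f z‖ = ‖dslope f p z‖ * ‖p - z‖ := by
  calc ‖p - f z‖ = ‖f z - f p‖ := by rw [norm_sub_rev, hp]
    _ = ‖dslope f p z‖ * ‖p - z‖ := by
      rw [← sub_smul_dslope, smul_eq_mul, norm_mul, norm_sub_rev, mul_comm]

def omegaWeight (a b : ℂ) (μ ν : ℝ) (z : ℂ) : ℂ := (a - z) ^ (μ : ℂ) * (b - z) ^ (ν : ℂ)

lemma norm_omegaWeight_apply_div {f : ℂ → ℂ} {a b z : ℂ} (ha : f a = a) (hb : f b = b)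
    (hza : z ≠ a) (hzb : z ≠ b) (μ ν : ℝ) :
    ‖omegaWeight a b μ ν (f z) / omegaWeight a b μ ν z‖ =
      ‖dslope f a z‖ ^ μ * ‖dslope f b z‖ ^ ν := by
  have hpa : 0 < ‖a - z‖ ^ μ := by
    have := sub_ne_zero.mpr hza.symm
    positivity
  have hpb : 0 < ‖b - z‖ ^ ν := by
    have := sub_ne_zero.mpr hzb.symm
    positivity
  simp only [omegaWeight, norm_div, norm_mul, norm_cpow_real, Real.mul_rpow (norm_nonneg _)
    (norm_nonneg _), norm_sub_apply_eq_norm_dslope_mul ha, norm_sub_apply_eq_norm_dslope_mul hb]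
  field_simp

lemma HypAuto.injOn_closedBall (h : HypAuto) : InjOn h.ψ (closedBall 0 1) := by
  obtain ⟨R, hR, hψ⟩ := h.holo
  exact injOn_closedBall_of_bijOn_ball (hψ.continuousOn.mono (closedBall_subset_ball hR))
    (hψ.mono (ball_subset_ball hR.le)) h.bij

lemma HypAuto.continuousOn_norm_dslope (h : HypAuto) {p : ℂ} (hp : ‖p‖ ≤ 1) :
    ContinuousOn (fun z ↦ ‖dslope h.ψ p z‖) (closedBall 0 1) := by
  obtain ⟨R, hR, hψ⟩ := h.holo
  have hpR : ball (0 : ℂ) R ∈ 𝓝 p :=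
    isOpen_ball.mem_nhds (mem_ball_zero_iff.mpr (hp.trans_lt hR))
  exact (((differentiableOn_dslope hpR).mpr hψ).continuousOn.mono (closedBall_subset_ball hR)).norm

lemma HypAuto.norm_dslope_pos (h : HypAuto) {p : ℂ} (hp : ‖p‖ ≤ 1) (hd : deriv h.ψ p ≠ 0) :
    ∀ z ∈ closedBall (0 : ℂ) 1, 0 < ‖dslope h.ψ p z‖ := fun _ hz ↦
  norm_pos_iff.mpr <|
    dslope_ne_zero_of_injOn h.injOn_closedBall (mem_closedBall_zero_iff.mpr hp) hz hd

theorem omega_quotient_bounded_general (h : HypAuto) (μ ν : ℝ) :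
    ∃ c C : ℝ, 0 < c ∧
      ∀ z ∈ ball (0:ℂ) 1,
        c ≤ ‖((h.a - h.ψ z) ^ (μ : ℂ) * (h.b - h.ψ z) ^ (ν : ℂ)) /
              ((h.a - z) ^ (μ : ℂ) * (h.b - z) ^ (ν : ℂ))‖ ∧
        ‖((h.a - h.ψ z) ^ (μ : ℂ) * (h.b - h.ψ z) ^ (ν : ℂ)) /
              ((h.a - z) ^ (μ : ℂ) * (h.b - z) ^ (ν : ℂ))‖ ≤ C := by
  have hda : deriv h.ψ h.a ≠ 0 := by rw [h.hda]; exact ofReal_ne_zero.mpr h.hda1.1.ne'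
  have hdb : deriv h.ψ h.b ≠ 0 := by rw [h.hdb]; exact ofReal_ne_zero.mpr (by linarith [h.hdb1])
  have hposa := h.norm_dslope_pos h.ha.le hda
  have hposb := h.norm_dslope_pos h.hb.le hdb
  obtain ⟨c, C, hc, hbounds⟩ := (isCompact_closedBall (0 : ℂ) 1).exists_bounds_of_continuousOn_pos
    (F := fun z ↦ ‖dslope h.ψ h.a z‖ ^ μ * ‖dslope h.ψ h.b z‖ ^ ν)
    (((h.continuousOn_norm_dslope h.ha.le).rpow_const fun z hz ↦ .inl (hposa z hz).ne').mul
      ((h.continuousOn_norm_dslope h.hb.le).rpow_const fun z hz ↦ .inl (hposb z hz).ne'))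
    fun z hz ↦ mul_pos (Real.rpow_pos_of_pos (hposa z hz) μ) (Real.rpow_pos_of_pos (hposb z hz) ν)
  refine ⟨c, C, hc, fun z hz ↦ ?_⟩
  have hz_ne : ∀ p : ℂ, ‖p‖ = 1 → z ≠ p := fun p hp hzp ↦
    (mem_ball_zero_iff.mp hz).ne (hzp ▸ hp)
  rw [← omegaWeight, ← omegaWeight,
    norm_omegaWeight_apply_div h.fixa h.fixb (hz_ne _ h.ha) (hz_ne _ h.hb)]
  exact hbounds z (ball_subset_closedBall hz)

/-- For `ω_{μ,ν}(z) = (a-z)^μ (b-z)^ν`, the quotient `|ω_{μ,ν}(ψ z) / ω_{μ,ν} z|`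
is bounded above and bounded away from zero on the unit disc. -/
theorem omega_quotient_bounded (h : HypAuto) (μ ν : ℝ) (hμ : 0 ≤ μ) (hν : 0 ≤ ν) :
    ∃ c C : ℝ, 0 < c ∧
      ∀ z ∈ ball (0:ℂ) 1,
        c ≤ ‖((h.a - h.ψ z) ^ (μ : ℂ) * (h.b - h.ψ z) ^ (ν : ℂ)) /
              ((h.a - z) ^ (μ : ℂ) * (h.b - z) ^ (ν : ℂ))‖ ∧
        ‖((h.a - h.ψ z) ^ (μ : ℂ) * (h.b - h.ψ z) ^ (ν : ℂ)) /
              ((h.a - z) ^ (μ : ℂ) * (h.b - z) ^ (ν : ℂ))‖ ≤ C :=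
  omega_quotient_bounded_general h μ ν
end
end

section
/- Let ψ be a hyperbolic automorphism of 𝔻 with fixed points a (attractive), b (repulsive) on ∂𝔻, and μ, ν ≥ 0. Then lim_{𝔻 ∋ z → a} ω_{μ,ν}(ψ(z))/ω_{μ,ν}(z) = (ψ'(a))^μ and lim_{𝔻 ∋ z → b} ω_{μ,ν}(ψ(z))/ω_{μ,ν}(z) = (ψ'(b))^ν, taking the limit of the modulus. -/
/-
At a boundary fixed point `c` of `ψ` the difference quotient `(c - ψ z)/(c - z)` tends to
`ψ'(c)`, while at the other fixed point `c'` the quotient `(c' - ψ z)/(c' - z)` tends to `1`.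
The modulus of the `ω`-quotient factors as the `μ`-th and `ν`-th powers of the moduli of these
two quotients, so its limit at `a` is `ψ'(a)^μ · 1^ν` and at `b` it is `1^μ · ψ'(b)^ν`.
-/

open Complex Filter Metric Set

noncomputable section

open Topology

section FixedPointQuotients

variable {𝕜 : Type*} [NontriviallyNormedField 𝕜] {ψ : 𝕜 → 𝕜} {c c' d : 𝕜}

theorem tendsto_sub_div_sub_of_hasDerivAt_of_fixed {s : Set 𝕜} (hd : HasDerivAt ψ d c)
    (hfix : ψ c = c) (hs : c ∉ s) :
    Tendsto (fun z => (c - ψ z) / (c - z)) (𝓝[s] c) (𝓝 d) := by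
  have hslope := (hasDerivAt_iff_tendsto_slope.mp hd).mono_left
    (nhdsWithin_mono c (subset_compl_singleton_iff.mpr hs))
  refine hslope.congr fun z => ?_
  rw [slope_def_field, hfix, ← neg_div_neg_eq, neg_sub, neg_sub]

theorem tendsto_sub_div_sub_of_continuousAt_of_fixed (hψ : ContinuousAt ψ c)
    (hfix : ψ c = c) (hne : c' ≠ c) :
    Tendsto (fun z => (c' - ψ z) / (c' - z)) (𝓝 c) (𝓝 1) := by
  have hψc : Tendsto ψ (𝓝 c) (𝓝 c) := by simpa only [hfix] using hψ.tendsto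
  have hquot : Tendsto (fun z => (c' - ψ z) / (c' - z)) (𝓝 c) (𝓝 ((c' - c) / (c' - c))) :=
    (tendsto_const_nhds.sub hψc).div (tendsto_const_nhds.sub tendsto_id) (sub_ne_zero.mpr hne)
  rwa [div_self (sub_ne_zero.mpr hne)] at hquot

end FixedPointQuotients

theorem norm_cpow_mul_cpow_div (x y x' y' : ℂ) (μ ν : ℝ) :
    ‖(x ^ (μ : ℂ) * y ^ (ν : ℂ)) / (x' ^ (μ : ℂ) * y' ^ (ν : ℂ))‖ =
      ‖x / x'‖ ^ μ * ‖y / y'‖ ^ ν := by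
  rw [norm_div, norm_mul, norm_mul, norm_div, norm_div, norm_cpow_real, norm_cpow_real,
    norm_cpow_real, norm_cpow_real, Real.div_rpow (norm_nonneg _) (norm_nonneg _),
    Real.div_rpow (norm_nonneg _) (norm_nonneg _), div_mul_div_comm]

theorem tendsto_norm_omega_quotient {l : Filter ℂ} {ψ : ℂ → ℂ} {a b p q : ℂ} (μ ν : ℝ)
    (hp : p ≠ 0) (hq : q ≠ 0) (ha : Tendsto (fun z => (a - ψ z) / (a - z)) l (𝓝 p))
    (hb : Tendsto (fun z => (b - ψ z) / (b - z)) l (𝓝 q)) :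
    Tendsto (fun z => ‖((a - ψ z) ^ (μ : ℂ) * (b - ψ z) ^ (ν : ℂ)) /
        ((a - z) ^ (μ : ℂ) * (b - z) ^ (ν : ℂ))‖) l (𝓝 (‖p‖ ^ μ * ‖q‖ ^ ν)) := by
  simp only [norm_cpow_mul_cpow_div]
  exact (ha.norm.rpow_const (.inl (norm_ne_zero_iff.mpr hp))).mul
    (hb.norm.rpow_const (.inl (norm_ne_zero_iff.mpr hq)))

theorem HypAuto.hasDerivAt_of_norm_eq_one (h : HypAuto) {c : ℂ} (hc : ‖c‖ = 1) :
    HasDerivAt h.ψ (deriv h.ψ c) c := by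
  obtain ⟨R, hR, hdiff⟩ := h.holo
  exact (hdiff.differentiableAt (isOpen_ball.mem_nhds (by simp [hc, hR]))).hasDerivAt

theorem omega_quotient_limits_general (h : HypAuto) (μ ν : ℝ) :
    Tendsto
      (fun z : ℂ => ‖
        (((h.a - h.ψ z) ^ (μ : ℂ) * (h.b - h.ψ z) ^ (ν : ℂ)) /
          ((h.a - z) ^ (μ : ℂ) * (h.b - z) ^ (ν : ℂ)))‖)
      (nhdsWithin h.a (ball (0:ℂ) 1)) (nhds (h.da ^ μ)) ∧
    Tendsto
      (fun z : ℂ => ‖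
        (((h.a - h.ψ z) ^ (μ : ℂ) * (h.b - h.ψ z) ^ (ν : ℂ)) /
          ((h.a - z) ^ (μ : ℂ) * (h.b - z) ^ (ν : ℂ)))‖)
      (nhdsWithin h.b (ball (0:ℂ) 1)) (nhds (h.db ^ ν)) := by
  have hψa := h.hasDerivAt_of_norm_eq_one h.ha
  have hψb := h.hasDerivAt_of_norm_eq_one h.hb
  have hda : 0 < h.da := h.hda1.1
  have hdb : 0 < h.db := zero_lt_one.trans h.hdb1
  have ha_out : h.a ∉ ball (0 : ℂ) 1 := by simp [h.ha]
  have hb_out : h.b ∉ ball (0 : ℂ) 1 := by simp [h.hb]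
  constructor
  · have key := tendsto_norm_omega_quotient μ ν (ofReal_ne_zero.mpr hda.ne') one_ne_zero
      (h.hda ▸ tendsto_sub_div_sub_of_hasDerivAt_of_fixed hψa h.fixa ha_out)
      ((tendsto_sub_div_sub_of_continuousAt_of_fixed hψa.continuousAt h.fixa
        h.hab.symm).mono_left nhdsWithin_le_nhds)
    simpa [abs_of_pos hda] using key
  · have key := tendsto_norm_omega_quotient μ ν one_ne_zero (ofReal_ne_zero.mpr hdb.ne')
      ((tendsto_sub_div_sub_of_continuousAt_of_fixed hψb.continuousAt h.fixb
        h.hab).mono_left nhdsWithin_le_nhds)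
      (h.hdb ▸ tendsto_sub_div_sub_of_hasDerivAt_of_fixed hψb h.fixb hb_out)
    simpa [abs_of_pos hdb] using key

/-- `lim_{𝔻∋z→a} |ω_{μ,ν}(ψ z)/ω_{μ,ν}(z)| = ψ'(a)^μ` and
`lim_{𝔻∋z→b} |ω_{μ,ν}(ψ z)/ω_{μ,ν}(z)| = ψ'(b)^ν`, where
`ω_{μ,ν}(z) = (a-z)^μ (b-z)^ν`. -/
theorem omega_quotient_limits (h : HypAuto) (μ ν : ℝ) (hμ : 0 ≤ μ) (hν : 0 ≤ ν) :
    Tendsto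
      (fun z : ℂ => ‖
        (((h.a - h.ψ z) ^ (μ : ℂ) * (h.b - h.ψ z) ^ (ν : ℂ)) /
          ((h.a - z) ^ (μ : ℂ) * (h.b - z) ^ (ν : ℂ)))‖)
      (nhdsWithin h.a (ball (0:ℂ) 1)) (nhds (h.da ^ μ)) ∧
    Tendsto
      (fun z : ℂ => ‖
        (((h.a - h.ψ z) ^ (μ : ℂ) * (h.b - h.ψ z) ^ (ν : ℂ)) /
          ((h.a - z) ^ (μ : ℂ) * (h.b - z) ^ (ν : ℂ)))‖)
      (nhdsWithin h.b (ball (0:ℂ) 1)) (nhds (h.db ^ ν)) :=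
  omega_quotient_limits_general h μ ν
end
end

section
/- Let T be a bounded invertible operator on a complex Banach space X, let f ∈ X be nonzero, and suppose limsup_n ‖Tⁿf‖^{1/n} ≤ R₁ and limsup_n ‖T^{−n}f‖^{1/n} ≤ 1/R₂, where R₁ < R₂. Then the open annulus {λ : R₁ < |λ| < R₂} is contained in the spectrum of T. -/
/-!
If some `λ` in the annulus lay in the resolvent set, the two Neumann-type series
`F(z) = ∑ Tⁿ f / z^(n+1)` (converging for `|z| > R₁`) and `-G(z) = -∑ zⁿ T^(-(n+1)) f`
(converging for `|z| < R₂`) would both solve `(z - T) u = f`. They agree near `λ`, where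
`z - T` is invertible, hence on the whole annulus by the identity theorem. Glued together they
give an entire function that tends to `0` at infinity (as `F` does), so it vanishes by Liouville;
its value at `0` is `-T⁻¹ f`, forcing `f = 0`.
-/

open Filter Topology Set Metric

section

variable {X : Type*} [NormedAddCommGroup X] [NormedSpace ℂ X]

namespace FormalMultilinearSeries

noncomputable def ofCoeffs (a : ℕ → X) : FormalMultilinearSeries ℂ ℂ X :=
  fun n => ContinuousMultilinearMap.mkPiRing ℂ (Fin n) (a n)

@[simp]
theorem coeff_ofCoeffs (a : ℕ → X) (n : ℕ) : (ofCoeffs a).coeff n = a n := by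
  simp [ofCoeffs, coeff]

/-- The boundedness hypothesis is not implied by the `limsup` bound: the real `limsup` of an
unbounded sequence is `0`. -/
theorem mem_eball_radius_ofCoeffs {a : ℕ → X} {R : ℝ} (hR : 0 ≤ R)
    (hbdd : IsBoundedUnder (· ≤ ·) atTop fun n : ℕ => ‖a n‖ ^ (1 / (n : ℝ)))
    (hlim : limsup (fun n : ℕ => ‖a n‖ ^ (1 / (n : ℝ))) atTop ≤ R) {w : ℂ} (hw : ‖w‖ * R < 1) :
    w ∈ eball 0 (ofCoeffs a).radius := by
  obtain ⟨r, hRr, hwr⟩ : ∃ r, R < r ∧ ‖w‖ * r < 1 :=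
    Eventually.exists_gt <| (continuous_const.mul continuous_id).continuousAt.eventually_lt
      continuousAt_const hw
  have hr : 0 < r := hR.trans_lt hRr
  have hpow : ∀ᶠ n : ℕ in atTop, ‖a n‖ ≤ r ^ n := by
    filter_upwards [eventually_lt_of_limsup_lt (hlim.trans_lt hRr) hbdd, eventually_gt_atTop 0]
      with n hn hn0
    rw [one_div, Real.rpow_inv_lt_iff_of_pos (norm_nonneg _) hr.le (by positivity),
      Real.rpow_natCast] at hn
    exact hn.le
  have hradius : ((r⁻¹).toNNReal : ENNReal) ≤ (ofCoeffs a).radius := by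
    refine le_radius_of_eventually_le _ 1 ?_
    filter_upwards [hpow] with n hn
    rw [norm_apply_eq_norm_coef, coeff_ofCoeffs, Real.coe_toNNReal _ (by positivity), inv_pow]
    exact (div_le_one (by positivity)).2 hn
  refine mem_eball_zero_iff.2 (lt_of_lt_of_le ?_ hradius)
  rw [enorm_eq_nnnorm, ENNReal.coe_lt_coe, Real.lt_toNNReal_iff_coe_lt, coe_nnnorm]
  rwa [← one_div, lt_div_iff₀ hr]

end FormalMultilinearSeries

open FormalMultilinearSeries

section Orbit

variable (S : X →L[ℂ] X) (f : X)

theorem isBoundedUnder_norm_pow_apply_rpow :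
    IsBoundedUnder (· ≤ ·) atTop fun n : ℕ => ‖(S ^ n) f‖ ^ (1 / (n : ℝ)) := by
  set M := (‖S‖ + 1) * (‖f‖ + 1)
  have hM : 1 ≤ M := one_le_mul_of_one_le_of_one_le (by simp) (by simp)
  refine isBoundedUnder_of ⟨M, fun n => ?_⟩
  rcases Nat.eq_zero_or_pos n with rfl | hn
  · simpa using hM
  rw [one_div, Real.rpow_inv_le_iff_of_pos (norm_nonneg _) (by positivity) (by positivity),
    Real.rpow_natCast]
  calc ‖(S ^ n) f‖ ≤ ‖S‖ ^ n * ‖f‖ := (S ^ n).le_of_opNorm_le (norm_pow_le' S hn) f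
    _ ≤ (‖S‖ + 1) ^ n * (‖f‖ + 1) ^ n := by
      gcongr
      · linarith
      · exact le_self_pow₀ (by simp) hn.ne' |>.trans' (by linarith)
    _ = M ^ n := (mul_pow _ _ _).symm

/-- Formally `(1 - w • S)⁻¹ f`. -/
noncomputable def orbitSum : ℂ → X :=
  (ofCoeffs fun n => (S ^ n) f).sum

/-- `∑ Sⁿ f / z^(n+1)`, the Neumann series of `(z - S)⁻¹ f` at infinity. -/
noncomputable def resolventSeries (z : ℂ) : X :=
  z⁻¹ • orbitSum S f z⁻¹

theorem orbitSum_zero : orbitSum S f 0 = f := by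
  simp only [orbitSum, FormalMultilinearSeries.sum, apply_eq_pow_smul_coeff, coeff_ofCoeffs]
  rw [tsum_eq_single 0 fun n hn => by simp [zero_pow hn]]
  simp

theorem norm_inv_mul_lt_one {R : ℝ} (hR : 0 ≤ R) {z : ℂ} (hz : R < ‖z‖) : ‖z⁻¹‖ * R < 1 := by
  rwa [norm_inv, inv_mul_lt_iff₀ (hR.trans_lt hz), mul_one]

variable [CompleteSpace X] {S f} {R : ℝ}

theorem hasSum_orbitSum (hR : 0 ≤ R)
    (hlim : limsup (fun n : ℕ => ‖(S ^ n) f‖ ^ (1 / (n : ℝ))) atTop ≤ R) {w : ℂ}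
    (hw : ‖w‖ * R < 1) : HasSum (fun n => w ^ n • (S ^ n) f) (orbitSum S f w) := by
  simpa only [orbitSum, apply_eq_pow_smul_coeff, coeff_ofCoeffs] using
    (ofCoeffs fun n => (S ^ n) f).hasSum
      (mem_eball_radius_ofCoeffs hR (isBoundedUnder_norm_pow_apply_rpow S f) hlim hw)

theorem differentiableAt_orbitSum (hR : 0 ≤ R)
    (hlim : limsup (fun n : ℕ => ‖(S ^ n) f‖ ^ (1 / (n : ℝ))) atTop ≤ R) {w : ℂ}
    (hw : ‖w‖ * R < 1) : DifferentiableAt ℂ (orbitSum S f) w :=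
  ((ofCoeffs fun n => (S ^ n) f).analyticOnNhd w
    (mem_eball_radius_ofCoeffs hR (isBoundedUnder_norm_pow_apply_rpow S f) hlim hw)).differentiableAt

theorem orbitSum_eq_add_smul_apply (hR : 0 ≤ R)
    (hlim : limsup (fun n : ℕ => ‖(S ^ n) f‖ ^ (1 / (n : ℝ))) atTop ≤ R) {w : ℂ}
    (hw : ‖w‖ * R < 1) : orbitSum S f w = f + w • S (orbitSum S f w) := by
  have hsum := hasSum_orbitSum hR hlim hw
  have htail : HasSum (fun n => w ^ (n + 1) • (S ^ (n + 1)) f) (w • S (orbitSum S f w)) := by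
    convert (S.hasSum hsum).const_smul w using 2 with n
    rw [map_smul, smul_smul, ← pow_succ', pow_succ' S]
    rfl
  have hhead := ((hasSum_nat_add_iff' 1).2 hsum).unique htail
  simp only [Finset.range_one, Finset.sum_singleton, pow_zero, one_smul,
    one_apply_eq_self] at hhead
  rw [← hhead, add_sub_cancel]

theorem differentiableAt_resolventSeries (hR : 0 ≤ R)
    (hlim : limsup (fun n : ℕ => ‖(S ^ n) f‖ ^ (1 / (n : ℝ))) atTop ≤ R) {z : ℂ}
    (hz : R < ‖z‖) : DifferentiableAt ℂ (resolventSeries S f) z := by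
  have hz₀ : z ≠ 0 := norm_pos_iff.1 (hR.trans_lt hz)
  have hinv : DifferentiableAt ℂ (·⁻¹) z := differentiableAt_inv hz₀
  exact hinv.smul ((differentiableAt_orbitSum hR hlim (norm_inv_mul_lt_one hR hz)).comp z hinv)

theorem smul_sub_apply_resolventSeries (hR : 0 ≤ R)
    (hlim : limsup (fun n : ℕ => ‖(S ^ n) f‖ ^ (1 / (n : ℝ))) atTop ≤ R) {z : ℂ}
    (hz : R < ‖z‖) : z • resolventSeries S f z - S (resolventSeries S f z) = f := by
  have hz₀ : z ≠ 0 := norm_pos_iff.1 (hR.trans_lt hz)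
  rw [resolventSeries, smul_inv_smul₀ hz₀, map_smul, sub_eq_iff_eq_add]
  exact orbitSum_eq_add_smul_apply hR hlim (norm_inv_mul_lt_one hR hz)

theorem tendsto_resolventSeries_cocompact (hR : 0 ≤ R)
    (hlim : limsup (fun n : ℕ => ‖(S ^ n) f‖ ^ (1 / (n : ℝ))) atTop ≤ R) :
    Tendsto (resolventSeries S f) (cocompact ℂ) (𝓝 0) := by
  have hinv : Tendsto (·⁻¹) (cocompact ℂ) (𝓝 (0 : ℂ)) :=
    cobounded_eq_cocompact (α := ℂ) ▸ tendsto_inv₀_cobounded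
  have hcont := (differentiableAt_orbitSum hR hlim (by simp)).continuousAt.tendsto.comp hinv
  rw [← zero_smul ℂ (orbitSum S f 0)]
  exact hinv.smul hcont

theorem smul_sub_apply_neg_apply_orbitSum {T : X →L[ℂ] X} (hTS : T.comp S = 1) (hR : 0 ≤ R)
    (hlim : limsup (fun n : ℕ => ‖(S ^ n) f‖ ^ (1 / (n : ℝ))) atTop ≤ R) {z : ℂ}
    (hz : ‖z‖ * R < 1) : z • -S (orbitSum S f z) - T (-S (orbitSum S f z)) = f := by
  have hTS' : T (S (orbitSum S f z)) = orbitSum S f z := congr($hTS (orbitSum S f z))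
  rw [map_neg, hTS', smul_neg, sub_neg_eq_add, neg_add_eq_sub, sub_eq_iff_eq_add]
  exact orbitSum_eq_add_smul_apply hR hlim hz

end Orbit

theorem isPreconnected_norm_preimage_Ioo {R₁ : ℝ} (hR₁ : 0 ≤ R₁) (R₂ : ℝ) :
    IsPreconnected ((‖·‖) ⁻¹' Ioo R₁ R₂ : Set ℂ) := by
  have hpolar : ((‖·‖) ⁻¹' Ioo R₁ R₂ : Set ℂ) =
      (fun p : ℝ × ℝ => (p.1 : ℂ) * Complex.exp (p.2 * Complex.I)) '' (Ioo R₁ R₂ ×ˢ univ) := by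
    ext z
    constructor
    · exact fun hz => ⟨(‖z‖, z.arg), ⟨hz, trivial⟩, Complex.norm_mul_exp_arg_mul_I z⟩
    · rintro ⟨⟨r, θ⟩, ⟨hr, -⟩, rfl⟩
      simpa [Complex.norm_exp_ofReal_mul_I, abs_of_pos (hR₁.trans_lt hr.1)] using hr
  rw [hpolar]
  exact (isPreconnected_Ioo.prod isPreconnected_univ).image _ (by fun_prop)

theorem eqOn_of_smul_sub_apply_eq [CompleteSpace X] {T : X →L[ℂ] X} {f : X} {F G : ℂ → X}
    {U : Set ℂ} (hU : IsOpen U) (hU' : IsPreconnected U) (hF : DifferentiableOn ℂ F U)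
    (hG : DifferentiableOn ℂ G U) (hFf : ∀ z ∈ U, z • F z - T (F z) = f)
    (hGf : ∀ z ∈ U, z • G z - T (G z) = f) {μ : ℂ} (hμU : μ ∈ U) (hμ : μ ∉ spectrum ℂ T) :
    EqOn F G U := by
  have hres : ∀ z ∈ U, z ∉ spectrum ℂ T → F z = G z := fun z hz hzT =>
    (ContinuousLinearMap.isUnit_iff_bijective.1 (spectrum.notMem_iff.1 hzT)).injective <| by
      simp [Algebra.algebraMap_eq_smul_one, hFf z hz, hGf z hz]
  have hnear : F - G =ᶠ[𝓝 μ] 0 := by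
    filter_upwards [hU.mem_nhds hμU, (spectrum.isClosed T).isOpen_compl.mem_nhds hμ]
      with z hzU hzT
    exact sub_eq_zero.2 (hres z hzU hzT)
  have hzero := ((hF.sub hG).analyticOnNhd hU).eqOn_zero_of_preconnected_of_eventuallyEq_zero
    hU' hμU hnear
  exact fun z hz => sub_eq_zero.1 (hzero hz)

theorem eq_zero_of_eqOn_annulus_of_tendsto_cocompact {F G : ℂ → X} {R₁ R₂ : ℝ} (hR : R₁ < R₂)
    (hF : ∀ z, R₁ < ‖z‖ → DifferentiableAt ℂ F z) (hG : ∀ z, ‖z‖ < R₂ → DifferentiableAt ℂ G z)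
    (hFG : EqOn F G ((‖·‖) ⁻¹' Ioo R₁ R₂)) (hlim : Tendsto F (cocompact ℂ) (𝓝 0)) {z : ℂ}
    (hz : ‖z‖ < R₂) : G z = 0 := by
  set W : ℂ → X := fun z => if ‖z‖ < R₂ then G z else F z
  have hWF : ∀ z, R₁ < ‖z‖ → W z = F z := fun z h₁ => by
    by_cases h₂ : ‖z‖ < R₂
    · simp [W, h₂, hFG ⟨h₁, h₂⟩]
    · simp [W, h₂]
  have hW : Differentiable ℂ W := fun z => by
    rcases lt_or_ge ‖z‖ R₂ with h | h
    · refine (hG z h).congr_of_eventuallyEq ?_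
      filter_upwards [(isOpen_lt continuous_norm continuous_const).mem_nhds h] with w hw
      simp [W, show ‖w‖ < R₂ from hw]
    · refine (hF z (hR.trans_le h)).congr_of_eventuallyEq ?_
      filter_upwards [(isOpen_lt continuous_const continuous_norm).mem_nhds (hR.trans_le h)]
        with w hw
      exact hWF w hw
  have hWlim : Tendsto W (cocompact ℂ) (𝓝 0) :=
    hlim.congr' <| (tendsto_norm_cocompact_atTop.eventually_gt_atTop R₁).mono
      fun w hw => (hWF w hw).symm
  simpa [W, hz] using hW.apply_eq_of_tendsto_cocompact z hWlim

end

/-- Liouville-type spectral inclusion: if `T` is a bounded invertible operator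
on a complex Banach space, `f ≠ 0`, `limsup ‖Tⁿf‖^{1/n} ≤ R₁` and
`limsup ‖T⁻ⁿf‖^{1/n} ≤ 1/R₂` with `R₁ < R₂`, then the open annulus
`{λ : R₁ < |λ| < R₂}` is contained in the spectrum of `T`. -/
theorem annulus_subset_spectrum_of_orbit_growth
    (X : Type*) [NormedAddCommGroup X] [NormedSpace ℂ X] [CompleteSpace X]
    (T T' : X →L[ℂ] X) (hinv : T.comp T' = 1 ∧ T'.comp T = 1)
    (f : X) (hf : f ≠ 0) (R₁ R₂ : ℝ) (hR₁ : 0 ≤ R₁) (hR₂ : 0 < R₂)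
    (hlt : R₁ < R₂)
    (hgrow : limsup (fun n : ℕ => ‖(T ^ n) f‖ ^ (1 / (n:ℝ))) atTop ≤ R₁)
    (hgrow' : limsup (fun n : ℕ => ‖(T' ^ n) f‖ ^ (1 / (n:ℝ))) atTop ≤ 1 / R₂) :
    ∀ lam : ℂ, R₁ < ‖lam‖ → ‖lam‖ < R₂ →
      lam ∈ spectrum ℂ T := by
  intro lam hlam₁ hlam₂
  by_contra hlam
  have hR₂' : 0 ≤ 1 / R₂ := by positivity
  have hinner {z : ℂ} (hz : ‖z‖ < R₂) : ‖z‖ * (1 / R₂) < 1 := by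
    rwa [mul_one_div, div_lt_one hR₂]
  set G : ℂ → X := fun z => -T' (orbitSum T' f z)
  have hG : ∀ z, ‖z‖ < R₂ → DifferentiableAt ℂ G z := fun z hz =>
    (T'.differentiableAt.comp z (differentiableAt_orbitSum hR₂' hgrow' (hinner hz))).neg
  have hFG : EqOn (resolventSeries T f) G ((‖·‖) ⁻¹' Ioo R₁ R₂) :=
    eqOn_of_smul_sub_apply_eq (U := (‖·‖) ⁻¹' Ioo R₁ R₂) (isOpen_Ioo.preimage continuous_norm)
      (isPreconnected_norm_preimage_Ioo hR₁ R₂)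
      (fun z hz => (differentiableAt_resolventSeries hR₁ hgrow hz.1).differentiableWithinAt)
      (fun z hz => (hG z hz.2).differentiableWithinAt)
      (fun z hz => smul_sub_apply_resolventSeries hR₁ hgrow hz.1)
      (fun z hz => smul_sub_apply_neg_apply_orbitSum hinv.1 hR₂' hgrow' (hinner hz.2))
      ⟨hlam₁, hlam₂⟩ hlam
  have hG₀ : G 0 = 0 := eq_zero_of_eqOn_annulus_of_tendsto_cocompact hlt
    (fun z hz => differentiableAt_resolventSeries hR₁ hgrow hz) hG hFG
    (tendsto_resolventSeries_cocompact hR₁ hgrow) (by simpa using hR₂)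
  have hT'f : T' f = 0 := by simpa [G, orbitSum_zero] using hG₀
  exact hf (by simpa [hT'f] using (DFunLike.congr_fun hinv.1 f).symm)
end

section
/- Let ψ be a hyperbolic automorphism of 𝔻 with fixed points a, b and let δ = −log ψ'(a) > 0. For k ∈ ℤ define g_k(z) = ((b−z)/(a−z))^{2πik/δ}. Then each g_k is a bounded holomorphic function on 𝔻 satisfying g_k ∘ ψ = g_k, and the family {g_k}_{k∈ℤ} is linearly independent. -/
open Complex Filter Metric Set

noncomputable section

/-! The automorphism `ψ` is a Möbius map. Indeed, precomposing it with a disc automorphism that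
sends `0` to `ψ⁻¹(0)` gives a holomorphic bijection of `𝔻` fixing `0`; its inverse is holomorphic
too, so the Schwarz lemma applied to both shows that it is a rotation. A Möbius map with fixed
points `a`, `b` multiplies `(b - z) / (a - z)` by its multiplier `ψ'(b) = e^δ`, and
`(e^δ) ^ (2πik/δ) = 1`, which gives the invariance. The exponents are purely imaginary, which gives
the bound. Finally `(b - z) / (a - z)` takes every value `t c` with `t > 0` for a fixed `c ≠ 0`;
along this ray `g_k` becomes `c ^ w_k * e ^ (w_k s)` with `t = e ^ s`, and the exponentials
`s ↦ e ^ (w s)` are distinct characters of `ℝ`, hence linearly independent. -/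

open scoped Topology ComplexConjugate

section HolomorphicInverse

variable {f : ℂ → ℂ} {U V : Set ℂ} {z : ℂ}

theorem not_eventuallyConst_of_injOn (hinj : InjOn f U) (hU : U ∈ 𝓝 z) :
    ¬EventuallyConst f (𝓝 z) := by
  rw [eventuallyConst_iff_exists_eventuallyEq]
  rintro ⟨c, hc⟩
  have hz : ∀ᶠ y in 𝓝 z, y = z := by
    filter_upwards [hc, hU] with y hy hyU
    exact hinj hyU (mem_of_mem_nhds hU) (hy.trans hc.self_of_nhds.symm)
  obtain ⟨y, hyz, hyne⟩ :=
    ((hz.filter_mono nhdsWithin_le_nhds : ∀ᶠ y in 𝓝[≠] z, y = z).and self_mem_nhdsWithin).exists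
  exact hyne hyz

theorem AnalyticAt.nhds_le_map_nhds_of_injOn (hf : AnalyticAt ℂ f z) (hinj : InjOn f U)
    (hU : U ∈ 𝓝 z) : 𝓝 (f z) ≤ map f (𝓝 z) :=
  hf.eventually_constant_or_nhds_le_map_nhds.resolve_left fun h =>
    not_eventuallyConst_of_injOn hinj hU (eventuallyConst_iff_exists_eventuallyEq.2 ⟨_, h⟩)

theorem AnalyticAt.eventually_deriv_ne_zero_of_injOn (hf : AnalyticAt ℂ f z) (hinj : InjOn f U)
    (hU : U ∈ 𝓝 z) : ∀ᶠ y in 𝓝[≠] z, deriv f y ≠ 0 := by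
  refine hf.deriv.eventually_eq_zero_or_eventually_ne_zero.resolve_left fun h => ?_
  have htop : analyticOrderAt (f · - f z) z = ⊤ := by
    rw [← hf.analyticOrderAt_deriv_add_one, analyticOrderAt_eq_top.2 h, top_add]
  exact not_eventuallyConst_of_injOn hinj hU
    (eventuallyConst_iff_analyticOrderAt_sub_eq_top.2 htop)

/-- The inverse of a holomorphic bijection is holomorphic: it is continuous by the open mapping
theorem, differentiable off the isolated critical values, and then everywhere by Riemann's
removable singularity theorem. -/
theorem differentiableOn_invFunOn_of_bijOn (hU : IsOpen U)
    (hf : DifferentiableOn ℂ f U) (hbij : BijOn f U V) :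
    DifferentiableOn ℂ (Function.invFunOn f U) V := by
  set g := Function.invFunOn f U
  have hinv : InvOn g f U V := hbij.invOn_invFunOn
  have hgU : MapsTo g V U := hbij.surjOn.mapsTo_invFunOn
  have hana : ∀ z ∈ U, AnalyticAt ℂ f z := hf.analyticOnNhd hU
  have hle : ∀ z ∈ U, 𝓝 (f z) ≤ map f (𝓝 z) := fun z hz =>
    (hana z hz).nhds_le_map_nhds_of_injOn hbij.injOn (hU.mem_nhds hz)
  have hV : ∀ y ∈ V, V ∈ 𝓝 y := fun y hy => by
    rw [← hinv.2 hy]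
    exact hle _ (hgU hy)
      (mem_of_superset (image_mem_map (hU.mem_nhds (hgU hy))) hbij.mapsTo.image_subset)
  have hcont : ∀ y ∈ V, ContinuousAt g y := fun y hy => by
    have hgf : g ∘ f =ᶠ[𝓝 (g y)] id :=
      eventually_of_mem (hU.mem_nhds (hgU hy)) fun x hx => hinv.1 hx
    have h := (tendsto_map'_iff.2 (tendsto_id.congr' hgf.symm)).mono_left (hle _ (hgU hy))
    rwa [hinv.2 hy] at h
  have hdiff : ∀ y ∈ V, deriv f (g y) ≠ 0 → DifferentiableAt ℂ g y := fun y hy hy' =>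
    (HasDerivAt.of_local_left_inverse (hcont y hy)
      (hf.differentiableAt (hU.mem_nhds (hgU hy))).hasDerivAt hy'
      (eventually_of_mem (hV y hy) fun x hx => hinv.2 hx)).differentiableAt
  intro w hw
  have hne : Tendsto g (𝓝[≠] w) (𝓝[≠] (g w)) :=
    tendsto_nhdsWithin_of_tendsto_nhds_of_eventually_within g
      ((hcont w hw).mono_left nhdsWithin_le_nhds) <| by
        filter_upwards [self_mem_nhdsWithin, nhdsWithin_le_nhds (hV w hw)] with y hy hyV hgy
        exact hy (by rw [← hinv.2 hyV, mem_singleton_iff.1 hgy, hinv.2 hw]; rfl)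
  have hev : ∀ᶠ y in 𝓝[≠] w, DifferentiableAt ℂ g y := by
    filter_upwards [hne.eventually ((hana _ (hgU hw)).eventually_deriv_ne_zero_of_injOn
      hbij.injOn (hU.mem_nhds (hgU hw))), nhdsWithin_le_nhds (hV w hw)] with y hy hyV
    exact hdiff y hyV hy
  exact (analyticAt_of_differentiable_on_punctured_nhds_of_continuousAt hev
    (hcont w hw)).differentiableAt.differentiableWithinAt

end HolomorphicInverse

theorem exists_eqOn_mul_of_bijOn_ball {f : ℂ → ℂ} (hf : DifferentiableOn ℂ f (ball 0 1))
    (hbij : BijOn f (ball 0 1) (ball 0 1)) (hf0 : f 0 = 0) :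
    ∃ C : ℂ, EqOn f (C * ·) (ball 0 1) := by
  set g := Function.invFunOn f (ball 0 1)
  have hinv : InvOn g f (ball 0 1) (ball 0 1) := hbij.invOn_invFunOn
  have hg : DifferentiableOn ℂ g (ball 0 1) :=
    differentiableOn_invFunOn_of_bijOn isOpen_ball hf hbij
  have h0 : (0 : ℂ) ∈ ball 0 1 := mem_ball_self one_pos
  have hg0 : g 0 = 0 := by simpa [hf0] using hinv.1 h0
  have hfmaps : MapsTo f (ball 0 1) (closedBall (f 0) 1) := fun z hz => by
    rw [hf0]; exact ball_subset_closedBall (hbij.mapsTo hz)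
  have hgmaps : MapsTo g (ball 0 1) (closedBall (g 0) 1) := fun z hz => by
    rw [hg0]; exact ball_subset_closedBall (hbij.surjOn.mapsTo_invFunOn hz)
  have hf' : ‖deriv f 0‖ ≤ 1 := norm_deriv_le_one_of_mapsTo_ball hf hfmaps one_pos
  have hg' : ‖deriv g 0‖ ≤ 1 := norm_deriv_le_one_of_mapsTo_ball hg hgmaps one_pos
  have hchain : deriv g 0 * deriv f 0 = 1 := by
    have hgd : HasDerivAt g (deriv g 0) (f 0) := by
      rw [hf0]; exact (hg.differentiableAt (isOpen_ball.mem_nhds h0)).hasDerivAt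
    exact (hgd.comp 0 (hf.differentiableAt (isOpen_ball.mem_nhds h0)).hasDerivAt).unique
      ((hasDerivAt_id 0).congr_of_eventuallyEq
        (eventually_of_mem (isOpen_ball.mem_nhds h0) fun z hz => hinv.1 hz))
  have hnorm : ‖dslope f 0 0‖ = 1 / 1 := by
    have := congrArg norm hchain
    rw [norm_mul, norm_one] at this
    rw [dslope_same, div_one]
    nlinarith [norm_nonneg (deriv f 0), norm_nonneg (deriv g 0)]
  obtain ⟨C, -, hC⟩ :=
    affine_of_mapsTo_ball_of_exists_norm_dslope_eq_div' hf hfmaps ⟨0, h0, hnorm⟩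
  exact ⟨C, fun z hz => by simpa [hf0, mul_comm] using hC hz⟩

def mobiusDisc (α z : ℂ) : ℂ := (z + α) / (1 + conj α * z)

section MobiusDisc

variable {α z : ℂ}

theorem normSq_one_add_conj_mul_sub_normSq_add (α z : ℂ) :
    normSq (1 + conj α * z) - normSq (z + α) = (1 - normSq α) * (1 - normSq z) := by
  simp only [normSq_apply, add_re, add_im, mul_re, mul_im, conj_re, conj_im, one_re, one_im]
  ring

theorem normSq_add_lt_normSq_one_add_conj_mul (hα : α ∈ ball (0 : ℂ) 1)
    (hz : z ∈ ball (0 : ℂ) 1) : normSq (z + α) < normSq (1 + conj α * z) := by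
  have hlt : ∀ w ∈ ball (0 : ℂ) 1, normSq w < 1 := fun w hw => by
    rw [normSq_eq_norm_sq]
    have := mem_ball_zero_iff.1 hw
    nlinarith [norm_nonneg w]
  have := normSq_one_add_conj_mul_sub_normSq_add α z
  nlinarith [hlt α hα, hlt z hz]

theorem one_add_conj_mul_ne_zero (hα : α ∈ ball (0 : ℂ) 1) (hz : z ∈ ball (0 : ℂ) 1) :
    1 + conj α * z ≠ 0 := fun h0 => by
  have := normSq_add_lt_normSq_one_add_conj_mul hα hz
  rw [h0, map_zero] at this
  exact (normSq_nonneg _).not_gt this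

theorem mobiusDisc_mem_ball (hα : α ∈ ball (0 : ℂ) 1) (hz : z ∈ ball (0 : ℂ) 1) :
    mobiusDisc α z ∈ ball (0 : ℂ) 1 := by
  have hd := one_add_conj_mul_ne_zero hα hz
  rw [mem_ball_zero_iff, mobiusDisc, norm_div, div_lt_one (norm_pos_iff.2 hd),
    ← sq_lt_sq₀ (norm_nonneg _) (norm_nonneg _), ← normSq_eq_norm_sq, ← normSq_eq_norm_sq]
  exact normSq_add_lt_normSq_one_add_conj_mul hα hz

theorem mobiusDisc_neg_mobiusDisc (hα : α ∈ ball (0 : ℂ) 1) (hz : z ∈ ball (0 : ℂ) 1) :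
    mobiusDisc (-α) (mobiusDisc α z) = z := by
  have hd := one_add_conj_mul_ne_zero hα hz
  have hmd : mobiusDisc α z * (1 + conj α * z) = z + α := div_mul_cancel₀ _ hd
  have hd' := one_add_conj_mul_ne_zero (α := -α) (by simpa using hα) (mobiusDisc_mem_ball hα hz)
  set m := mobiusDisc α z
  rw [mobiusDisc, div_eq_iff hd', map_neg]
  apply mul_right_cancel₀ hd
  linear_combination (1 + z * conj α) * hmd

theorem mobiusDisc_mobiusDisc_neg (hα : α ∈ ball (0 : ℂ) 1) (hz : z ∈ ball (0 : ℂ) 1) :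
    mobiusDisc α (mobiusDisc (-α) z) = z := by
  simpa using mobiusDisc_neg_mobiusDisc (α := -α) (by simpa using hα) hz

theorem bijOn_mobiusDisc (hα : α ∈ ball (0 : ℂ) 1) :
    BijOn (mobiusDisc α) (ball 0 1) (ball 0 1) :=
  InvOn.bijOn
    ⟨fun _ hz => mobiusDisc_neg_mobiusDisc hα hz, fun _ hz => mobiusDisc_mobiusDisc_neg hα hz⟩
    (fun _ hz => mobiusDisc_mem_ball hα hz) (fun _ hz => mobiusDisc_mem_ball (by simpa using hα) hz)

theorem differentiableOn_mobiusDisc (hα : α ∈ ball (0 : ℂ) 1) :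
    DifferentiableOn ℂ (mobiusDisc α) (ball 0 1) :=
  DifferentiableOn.div (by fun_prop) (by fun_prop) fun _ hz => one_add_conj_mul_ne_zero hα hz

end MobiusDisc

theorem exists_eqOn_mul_mobiusDisc_of_bijOn_ball {f : ℂ → ℂ}
    (hf : DifferentiableOn ℂ f (ball 0 1)) (hbij : BijOn f (ball 0 1) (ball 0 1)) :
    ∃ C α : ℂ, α ∈ ball (0 : ℂ) 1 ∧ EqOn f (fun z => C * mobiusDisc (-α) z) (ball 0 1) := by
  obtain ⟨α, hα, hfα⟩ := hbij.surjOn (mem_ball_self one_pos)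
  obtain ⟨C, hC⟩ := exists_eqOn_mul_of_bijOn_ball
    (hf.comp (differentiableOn_mobiusDisc hα) (bijOn_mobiusDisc hα).mapsTo)
    (hbij.comp (bijOn_mobiusDisc hα)) (by simp [mobiusDisc, hfα])
  refine ⟨C, α, hα, fun z hz => ?_⟩
  rw [← hC (mobiusDisc_mem_ball (by simpa using hα) hz), Function.comp_apply,
    mobiusDisc_mobiusDisc_neg hα hz]

theorem hasDerivAt_mobius {p q r s z : ℂ} (hz : r * z + s ≠ 0) :
    HasDerivAt (fun z => (p * z + q) / (r * z + s)) ((p * s - q * r) / (r * z + s) ^ 2) z :=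
  ((((hasDerivAt_id' z).const_mul p).add_const q).fun_div
    (((hasDerivAt_id' z).const_mul r).add_const s) hz).congr_deriv (by ring)

/-- `(p * s - q * r) / (r * b + s) ^ 2` is the derivative of the Möbius map at its fixed point `b`
(`hasDerivAt_mobius`). -/
theorem mobius_cross_ratio {p q r s a b z : ℂ} (hab : a ≠ b) (ha : r * a + s ≠ 0)
    (hb : r * b + s ≠ 0) (hz : r * z + s ≠ 0) (hfa : (p * a + q) / (r * a + s) = a)
    (hfb : (p * b + q) / (r * b + s) = b) :
    (b - (p * z + q) / (r * z + s)) * (a - z) =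
      (p * s - q * r) / (r * b + s) ^ 2 * ((b - z) * (a - (p * z + q) / (r * z + s))) := by
  rw [div_eq_iff ha] at hfa
  rw [div_eq_iff hb] at hfb
  have hp : p = r * (a + b) + s :=
    mul_left_cancel₀ (sub_ne_zero.2 hab) (by linear_combination hfa - hfb)
  have hq : q = -(r * a * b) := by linear_combination hfa - a * hp
  subst hp hq
  have hmul : ((r * (a + b) + s) * s - -(r * a * b) * r) / (r * b + s) ^ 2 =
      (r * a + s) / (r * b + s) := by
    rw [div_eq_div_iff (pow_ne_zero 2 hb) hb]
    ring
  have hM := div_mul_cancel₀ ((r * (a + b) + s) * z + -(r * a * b)) hz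
  rw [hmul, div_mul_eq_mul_div, eq_div_iff hb]
  linear_combination (b - a) * hM

theorem sub_ne_zero_of_norm_eq_one {c z : ℂ} (hc : ‖c‖ = 1) (hz : z ∈ ball (0 : ℂ) 1) :
    c - z ≠ 0 := fun h0 => by
  rw [mem_ball_zero_iff, ← sub_eq_zero.1 h0, hc] at hz
  exact lt_irrefl _ hz

namespace HypAuto

variable (h : HypAuto)

theorem exists_eqOn_mobius : ∃ p q r s : ℂ, ∃ ρ > (1 : ℝ), (∀ z ∈ ball (0 : ℂ) ρ, r * z + s ≠ 0) ∧
    EqOn h.ψ (fun z => (p * z + q) / (r * z + s)) (ball 0 ρ) := by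
  obtain ⟨R, hR, hψR⟩ := h.holo
  obtain ⟨C, α, hα, hψ⟩ :=
    exists_eqOn_mul_mobiusDisc_of_bijOn_ball (hψR.mono (ball_subset_ball hR.le)) h.bij
  have hα1 : ‖α‖ < 1 := mem_ball_zero_iff.1 hα
  -- on `ball 0 ρ` the pole `1 / conj α` of the Möbius map is avoided
  set ρ := min R (2 / (1 + ‖α‖))
  have hρ : 1 < ρ := lt_min hR (by rw [lt_div_iff₀ (by positivity)]; linarith)
  have hden : ∀ z ∈ ball (0 : ℂ) ρ, -conj α * z + 1 ≠ 0 := fun z hz h0 => by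
    have hz' : ‖z‖ * (1 + ‖α‖) < 2 :=
      (lt_div_iff₀ (by positivity)).1 ((mem_ball_zero_iff.1 hz).trans_le (min_le_right _ _))
    have : ‖α‖ * ‖z‖ = 1 := by
      rw [← norm_conj α, ← norm_mul, ← norm_neg, ← neg_mul, eq_neg_of_add_eq_zero_left h0,
        norm_neg, norm_one]
    nlinarith [norm_nonneg z, norm_nonneg α]
  refine ⟨C, -(C * α), -conj α, 1, ρ, hρ, hden, ?_⟩
  have hana : AnalyticOnNhd ℂ (fun z => (C * z + -(C * α)) / (-conj α * z + 1)) (ball 0 ρ) :=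
    DifferentiableOn.analyticOnNhd (DifferentiableOn.div (by fun_prop) (by fun_prop) hden)
      isOpen_ball
  have hψρ : AnalyticOnNhd ℂ h.ψ (ball 0 ρ) :=
    (hψR.analyticOnNhd isOpen_ball).mono (ball_subset_ball (min_le_left _ _))
  refine hψρ.eqOn_of_preconnected_of_eventuallyEq hana (convex_ball _ _).isPreconnected
    (mem_ball_self (by linarith))
    (eventually_of_mem (ball_mem_nhds 0 one_pos) fun z hz => ?_)
  simp only [hψ hz, mobiusDisc, map_neg]
  ring

theorem sub_map_mul_sub_eq {z : ℂ} (hz : z ∈ ball (0 : ℂ) 1) :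
    (h.b - h.ψ z) * (h.a - z) = h.db * ((h.b - z) * (h.a - h.ψ z)) := by
  obtain ⟨p, q, r, s, ρ, hρ, hden, hψ⟩ := h.exists_eqOn_mobius
  have hmem : ∀ c : ℂ, ‖c‖ = 1 → c ∈ ball (0 : ℂ) ρ := fun c hc => by
    rwa [mem_ball_zero_iff, hc]
  have ha := hmem _ h.ha
  have hb := hmem _ h.hb
  have hz' : z ∈ ball (0 : ℂ) ρ := ball_subset_ball hρ.le hz
  have hdb : (h.db : ℂ) = (p * s - q * r) / (r * h.b + s) ^ 2 := by
    rw [← h.hdb, (eventuallyEq_of_mem (isOpen_ball.mem_nhds hb) hψ).deriv_eq]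
    exact (hasDerivAt_mobius (hden _ hb)).deriv
  rw [hψ hz', hdb]
  exact mobius_cross_ratio h.hab (hden _ ha) (hden _ hb) (hden _ hz')
    ((hψ ha).symm.trans h.fixa) ((hψ hb).symm.trans h.fixb)

theorem div_map_eq {z : ℂ} (hz : z ∈ ball (0 : ℂ) 1) :
    (h.b - h.ψ z) / (h.a - h.ψ z) = h.db * ((h.b - z) / (h.a - z)) := by
  rw [mul_div_assoc', div_eq_div_iff (sub_ne_zero_of_norm_eq_one h.ha (h.bij.mapsTo hz))
    (sub_ne_zero_of_norm_eq_one h.ha hz), h.sub_map_mul_sub_eq hz, mul_assoc]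

theorem db_pos : 0 < h.db := one_pos.trans h.hdb1

theorem log_db : Real.log h.db = -Real.log h.da := by
  rw [eq_inv_of_mul_eq_one_right h.hmulder, Real.log_inv]

end HypAuto

theorem ofReal_mul_cpow {r : ℝ} (hr : 0 < r) {u : ℂ} (hu : u ≠ 0) (w : ℂ) :
    ((r : ℂ) * u) ^ w = (r : ℂ) ^ w * u ^ w := by
  have hr' : (r : ℂ) ≠ 0 := ofReal_ne_zero.2 hr.ne'
  rw [cpow_def_of_ne_zero (mul_ne_zero hr' hu), log_ofReal_mul hr hu, cpow_def_of_ne_zero hr',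
    cpow_def_of_ne_zero hu, ofReal_log hr.le, add_mul, exp_add]

theorem norm_cpow_le_exp_pi_mul_abs_im (u : ℂ) {w : ℂ} (hw : w.re = 0) :
    ‖u ^ w‖ ≤ Real.exp (Real.pi * |w.im|) :=
  calc ‖u ^ w‖ ≤ ‖u‖ ^ w.re / Real.exp (arg u * w.im) := norm_cpow_le u w
    _ = Real.exp (-(arg u * w.im)) := by rw [hw, Real.rpow_zero, Real.exp_neg, one_div]
    _ ≤ Real.exp (Real.pi * |w.im|) := by
      gcongr
      calc -(arg u * w.im) ≤ |arg u| * |w.im| := by rw [← abs_mul]; exact neg_le_abs _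
        _ ≤ Real.pi * |w.im| := by gcongr; exact abs_arg_le_pi u

theorem ofReal_cpow_two_pi_int_mul_I_div_log {x : ℝ} (hx : 0 < x) (hlog : Real.log x ≠ 0)
    (k : ℤ) : (x : ℂ) ^ (2 * Real.pi * k * I / Real.log x) = 1 := by
  rw [cpow_def_of_ne_zero (ofReal_ne_zero.2 hx.ne'), ← ofReal_log hx.le,
    mul_div_cancel₀ _ (ofReal_ne_zero.2 hlog)]
  rw [show 2 * (Real.pi : ℂ) * k * I = k * (2 * Real.pi * I) by ring, exp_int_mul_two_pi_mul_I]

theorem injective_two_pi_int_mul_I_div {δ : ℝ} (hδ : δ ≠ 0) :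
    Function.Injective fun k : ℤ => 2 * Real.pi * k * I / (δ : ℂ) := fun k l hkl => by
  have hδ' : (δ : ℂ) ≠ 0 := ofReal_ne_zero.2 hδ
  simp only [div_left_inj' hδ', mul_left_inj' I_ne_zero] at hkl
  exact_mod_cast mul_left_cancel₀ (mul_ne_zero two_ne_zero (ofReal_ne_zero.2 Real.pi_ne_zero)) hkl

theorem linearIndependent_exp_mul_ofReal :
    LinearIndependent ℂ (fun w : ℂ => fun x : ℝ => exp (w * x)) := by
  let χ : ℂ → Multiplicative ℝ →* ℂ := fun w =>
    { toFun := fun x => exp (w * x.toAdd)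
      map_one' := by simp
      map_mul' := fun x y => by simp [mul_add, exp_add] }
  have hderiv : ∀ w : ℂ, HasDerivAt (fun x : ℝ => exp (w * x)) w 0 := fun w => by
    simpa using ((hasDerivAt_id (0 : ℝ)).ofReal_comp.const_mul w).cexp
  have hχ : Function.Injective χ := fun w w' hww' => by
    have hfun : (fun x : ℝ => exp (w * x)) = fun x : ℝ => exp (w' * x) :=
      funext fun x => DFunLike.congr_fun hww' (Multiplicative.ofAdd x)
    exact (hderiv w).unique (hfun ▸ hderiv w')
  exact (linearIndependent_monoidHom (Multiplicative ℝ) ℂ).comp χ hχ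

theorem linearIndependent_cpow_of_forall_exists_eq_ofReal_mul {X : Type*} (u : X → ℂ) {c : ℂ}
    (hc : c ≠ 0) (hu : ∀ t : ℝ, 0 < t → ∃ x, u x = t * c) :
    LinearIndependent ℂ (fun w : ℂ => fun x => u x ^ w) := by
  choose φ hφ using fun s : ℝ => hu (Real.exp s) (Real.exp_pos s)
  have hcw : ∀ w : ℂ, c ^ w ≠ 0 := fun w => by
    rw [cpow_def_of_ne_zero hc]; exact exp_ne_zero _
  refine LinearIndependent.of_comp (LinearMap.funLeft ℂ ℂ φ) ?_
  convert linearIndependent_exp_mul_ofReal.units_smul fun w => Units.mk0 (c ^ w) (hcw w) using 1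
  funext w s
  rw [Function.comp_apply, LinearMap.funLeft_apply, hφ, ofReal_mul_cpow (Real.exp_pos s) hc,
    cpow_def_of_ne_zero (ofReal_ne_zero.2 (Real.exp_pos s).ne'), ← ofReal_log (Real.exp_pos s).le,
    Real.log_exp]
  simp [mul_comm]

theorem conj_mul_sub_one_ne_zero {a b : ℂ} (ha : ‖a‖ = 1) (hab : a ≠ b) : conj a * b - 1 ≠ 0 :=
  fun h0 => hab <| by
    have ha' : a * conj a = 1 := by rw [mul_conj, normSq_eq_norm_sq, ha]; norm_num
    linear_combination -a * h0 + b * ha'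

/-- `z ↦ (b - z) / (a - z)` maps the disc onto a half-plane bounded by a line through `0`, which
contains this ray. -/
theorem exists_mem_ball_div_sub_eq {a b : ℂ} (ha : ‖a‖ = 1) (hb : ‖b‖ = 1) (hab : a ≠ b) {t : ℝ}
    (ht : 0 < t) : ∃ z ∈ ball (0 : ℂ) 1, (b - z) / (a - z) = t * (conj a * b - 1) := by
  have ha' : a * conj a = 1 := by rw [mul_conj, normSq_eq_norm_sq, ha]; norm_num
  have hb' : b * conj b = 1 := by rw [mul_conj, normSq_eq_norm_sq, hb]; norm_num
  set c := conj a * b - 1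
  set ζ : ℂ := t * c
  have hkey : normSq (a * ζ - b) + 2 * t * normSq c = normSq (ζ - 1) := by
    have : (a * ζ - b) * conj (a * ζ - b) + 2 * t * (c * conj c) = (ζ - 1) * conj (ζ - 1) := by
      simp only [ζ, c, map_mul, map_sub, map_one, conj_conj, conj_ofReal]
      linear_combination ((t : ℂ) ^ 2 * (conj a * b - 1) * (a * conj b - 1)) * ha' + hb'
    simp only [mul_conj] at this
    exact_mod_cast this
  have hc : 0 < normSq c := normSq_pos.2 (conj_mul_sub_one_ne_zero ha hab)
  have hlt : normSq (a * ζ - b) < normSq (ζ - 1) := by nlinarith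
  have hζ : ζ - 1 ≠ 0 := fun h0 => by
    rw [h0, map_zero] at hlt; exact (normSq_nonneg _).not_gt hlt
  set z := (a * ζ - b) / (ζ - 1)
  have hz : z ∈ ball (0 : ℂ) 1 := by
    rw [mem_ball_zero_iff, norm_div, div_lt_one (norm_pos_iff.2 hζ),
      ← sq_lt_sq₀ (norm_nonneg _) (norm_nonneg _), ← normSq_eq_norm_sq, ← normSq_eq_norm_sq]
    exact hlt
  have hbz : b - z = ζ * (a - z) := by
    simp only [z]; field_simp; ring
  exact ⟨z, hz, by rw [hbz, mul_div_cancel_right₀ _ (sub_ne_zero_of_norm_eq_one ha hz)]⟩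

/-- With `δ = -log ψ'(a) > 0`, the functions
`g_k(z) = ((b-z)/(a-z))^{2πik/δ}`, `k ∈ ℤ`, are bounded on `𝔻`, invariant under
composition with `ψ` on `𝔻`, and linearly independent (as functions on `𝔻`). -/
theorem invariant_functions_gk (h : HypAuto) :
    0 < -Real.log h.da ∧
    (∀ k : ℤ, ∃ C : ℝ, ∀ z ∈ ball (0:ℂ) 1,
      ‖((h.b - z) / (h.a - z)) ^
        ((2 * Real.pi * k * Complex.I) / (-Real.log h.da : ℂ))‖ ≤ C) ∧
    (∀ k : ℤ, ∀ z ∈ ball (0:ℂ) 1,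
      ((h.b - h.ψ z) / (h.a - h.ψ z)) ^
          ((2 * Real.pi * k * Complex.I) / (-Real.log h.da : ℂ)) =
        ((h.b - z) / (h.a - z)) ^
          ((2 * Real.pi * k * Complex.I) / (-Real.log h.da : ℂ))) ∧
    LinearIndependent ℂ
      (fun k : ℤ => fun z : ball (0:ℂ) 1 =>
        ((h.b - (z : ℂ)) / (h.a - (z : ℂ))) ^
          ((2 * Real.pi * k * Complex.I) / (-Real.log h.da : ℂ))) := by
  have hlog : 0 < Real.log h.db := Real.log_pos h.hdb1
  have hu : ∀ z ∈ ball (0 : ℂ) 1, (h.b - z) / (h.a - z) ≠ 0 := fun z hz =>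
    div_ne_zero (sub_ne_zero_of_norm_eq_one h.hb hz) (sub_ne_zero_of_norm_eq_one h.ha hz)
  rw [← ofReal_neg, ← h.log_db]
  refine ⟨hlog, fun k => ⟨_, fun z _ => norm_cpow_le_exp_pi_mul_abs_im _ (by simp)⟩,
    fun k z hz => ?_, ?_⟩
  · rw [h.div_map_eq hz, ofReal_mul_cpow h.db_pos (hu z hz),
      ofReal_cpow_two_pi_int_mul_I_div_log h.db_pos hlog.ne', one_mul]
  · refine (linearIndependent_cpow_of_forall_exists_eq_ofReal_mul _
      (conj_mul_sub_one_ne_zero h.ha h.hab) fun t ht => ?_).comp _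
      (injective_two_pi_int_mul_I_div hlog.ne')
    obtain ⟨z, hz, hzt⟩ := exists_mem_ball_div_sub_eq h.ha h.hb h.hab ht
    exact ⟨⟨z, hz⟩, hzt⟩
end
end
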